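/- arXiv:1909.07802 — 7 statements merged into one kernel-verified Lean document; each statement's English description precedes it below -/
import Mathlib

section
/- Let δ ∈ K satisfy N(δ) ≠ 1. Then the Lunardon–Polverino binomial f(x) = x^σ + δ·x^(σ^(n−1)) is scattered. -/
/-!
Write `x = u t`. Since `z ↦ z^σ` is a field automorphism of order `n`, the equation
`x f(t) = t f(x)` becomes `w t^σ = δ (w t)^(σ^(n-1))` with `w = u - u^σ`. If `w ≠ 0`, taking
norms, which are invariant under `z ↦ z^q`, gives `N(w) N(t) = N(δ) N(w) N(t)`, i.e. `N(δ) = 1`.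
Hence `u^σ = u`, and as `gcd(s, n) = 1` the point `u` of the Frobenius `z ↦ z^q`, which is
periodic with periods `s` and `n`, is fixed by it.
-/

open Function

lemma isPeriodicPt_pow_iff {M : Type*} [Monoid M] {q j : ℕ} {x : M} :
    IsPeriodicPt (· ^ q) j x ↔ x ^ q ^ j = x := by
  rw [IsPeriodicPt, IsFixedPt, pow_iterate]

lemma pow_pow_eq_self_of_pow_eq_self {M : Type*} [Monoid M] {q : ℕ} {x : M} (h : x ^ q = x)
    (j : ℕ) : x ^ q ^ j = x :=
  isPeriodicPt_pow_iff.1 (IsFixedPt.isPeriodicPt h j)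

namespace FiniteField

variable {K : Type*} [Field K] [Fintype K] {q n : ℕ}

lemma exponent_ne_zero_of_card_eq_pow (hK : Fintype.card K = q ^ n) : n ≠ 0 := by
  rintro rfl
  exact (Fintype.one_lt_card (α := K)).ne' (by rw [hK, pow_zero])

lemma exists_ringChar_pow_eq_of_card_eq_pow (hK : Fintype.card K = q ^ n) :
    ∃ i, ringChar K ^ i = q := by
  obtain ⟨m, hp, hm⟩ := FiniteField.card K (ringChar K)
  have hq : q ∣ ringChar K ^ (m : ℕ) :=
    hm ▸ hK ▸ dvd_pow_self q (exponent_ne_zero_of_card_eq_pow hK)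
  obtain ⟨i, -, rfl⟩ := (Nat.dvd_prime_pow hp).1 hq
  exact ⟨i, rfl⟩

lemma sub_pow_pow_of_card_eq_pow (hK : Fintype.card K = q ^ n) (j : ℕ) (a b : K) :
    (a - b) ^ q ^ j = a ^ q ^ j - b ^ q ^ j := by
  obtain ⟨i, rfl⟩ := exists_ringChar_pow_eq_of_card_eq_pow hK
  have : Fact (ringChar K).Prime := ⟨CharP.char_is_prime K (ringChar K)⟩
  simp only [← pow_mul, sub_pow_char_pow]

lemma pow_pow_eq_self_of_card_eq_pow (hK : Fintype.card K = q ^ n) (j : ℕ) (a : K) :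
    a ^ (q ^ j) ^ n = a := by
  rw [← pow_mul, mul_comm, pow_mul, ← hK, FiniteField.pow_card_pow]

lemma pow_eq_self_of_pow_pow_eq_self {s : ℕ} (hK : Fintype.card K = q ^ n)
    (hsn : s.Coprime n) {u : K} (hu : u ^ q ^ s = u) : u ^ q = u := by
  have hn : IsPeriodicPt (· ^ q) n u := by
    simpa only [isPeriodicPt_pow_iff, pow_one] using pow_pow_eq_self_of_card_eq_pow hK 1 u
  simpa only [hsn.gcd_eq_one, isPeriodicPt_pow_iff, pow_one] using
    (isPeriodicPt_pow_iff.2 hu).gcd hn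

lemma pow_norm_exponent_pow_self (hK : Fintype.card K = q ^ n) (z : K) :
    (z ^ ((q ^ n - 1) / (q - 1))) ^ q = z ^ ((q ^ n - 1) / (q - 1)) := by
  have hn := exponent_ne_zero_of_card_eq_pow hK
  obtain ⟨r, rfl⟩ : ∃ r, q = r + 1 :=
    Nat.exists_eq_add_one.2 (Nat.pos_of_ne_zero (ne_zero_pow hn (hK ▸ Fintype.card_ne_zero)))
  have he : (r + 1) ^ n - 1 = ((r + 1) ^ n - 1) / (r + 1 - 1) * r := by
    simpa using (Nat.div_mul_cancel (Nat.sub_one_dvd_pow_sub_one (r + 1) n)).symm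
  generalize ((r + 1) ^ n - 1) / (r + 1 - 1) = e at he ⊢
  rw [pow_succ, ← pow_mul]
  rcases eq_or_ne z 0 with rfl | hz
  · rcases eq_or_ne e 0 with rfl | he₀ <;> simp [*]
  · rw [← he, ← hK, FiniteField.pow_card_sub_one_eq_one z hz, one_mul]

lemma pow_pow_norm_exponent (hK : Fintype.card K = q ^ n) (j : ℕ) (z : K) :
    (z ^ q ^ j) ^ ((q ^ n - 1) / (q - 1)) = z ^ ((q ^ n - 1) / (q - 1)) := by
  rw [pow_right_comm, pow_pow_eq_self_of_pow_eq_self (pow_norm_exponent_pow_self hK z)]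

lemma pow_norm_exponent_eq_one_of_mul_pow_eq (hK : Fintype.card K = q ^ n) {a b : ℕ}
    {δ w t : K} (hw : w ≠ 0) (ht : t ≠ 0) (h : w * t ^ q ^ a = δ * (w * t) ^ q ^ b) :
    δ ^ ((q ^ n - 1) / (q - 1)) = 1 := by
  have hN := congrArg (· ^ ((q ^ n - 1) / (q - 1))) h
  simp only [mul_pow, pow_pow_norm_exponent hK] at hN
  have hwt : w ^ ((q ^ n - 1) / (q - 1)) * t ^ ((q ^ n - 1) / (q - 1)) ≠ 0 := by
    positivity
  exact (mul_eq_right₀ hwt).1 hN.symm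

end FiniteField

section

open FiniteField

variable {K : Type*} [Field K] [Fintype K]

def lunardonPolverino (q n s : ℕ) (δ x : K) : K :=
  x ^ (q ^ s) + δ * x ^ ((q ^ s) ^ (n - 1))

lemma sub_pow_mul_pow_eq_of_mul_lunardonPolverino_eq {q n s : ℕ}
    (hK : Fintype.card K = q ^ n) {δ u t : K} (ht : t ≠ 0)
    (h : u * t * lunardonPolverino q n s δ t = t * lunardonPolverino q n s δ (u * t)) :
    (u - u ^ q ^ s) * t ^ q ^ s = δ * ((u - u ^ q ^ s) * t) ^ q ^ (s * (n - 1)) := by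
  have hn := exponent_ne_zero_of_card_eq_pow hK
  have h' : u * lunardonPolverino q n s δ t = lunardonPolverino q n s δ (u * t) :=
    mul_left_cancel₀ ht (by linear_combination h)
  have hσn : (u ^ q ^ s) ^ (q ^ s) ^ (n - 1) = u := by
    rw [← pow_mul, ← pow_succ', Nat.sub_add_cancel (Nat.one_le_iff_ne_zero.2 hn),
      pow_pow_eq_self_of_card_eq_pow hK]
  have hfrob : (u - u ^ q ^ s) ^ q ^ (s * (n - 1)) = u ^ (q ^ s) ^ (n - 1) - u := by
    rw [sub_pow_pow_of_card_eq_pow hK, pow_mul q s, hσn]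
  rw [mul_pow, hfrob]
  unfold lunardonPolverino at h'
  linear_combination h'

end

theorem stmt_1_general (q n s : ℕ)
    (hsn : Nat.Coprime s n) (K : Type*) [Field K] [Fintype K]
    (hK : Fintype.card K = q ^ n) (δ : K)
    (hδ : δ ^ ((q ^ n - 1) / (q - 1)) ≠ 1) :
    ∀ x t : K, x ≠ 0 → t ≠ 0 →
      x * (t ^ (q ^ s) + δ * t ^ ((q ^ s) ^ (n - 1))) =
        t * (x ^ (q ^ s) + δ * x ^ ((q ^ s) ^ (n - 1))) →
      ∃ c : K, c ^ q = c ∧ x = c * t := by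
  intro x t _ ht h
  obtain ⟨u, rfl⟩ : ∃ u, x = u * t := ⟨x / t, (div_mul_cancel₀ x ht).symm⟩
  refine ⟨u, FiniteField.pow_eq_self_of_pow_pow_eq_self hK hsn ?_, rfl⟩
  by_contra hu
  have hw : u - u ^ q ^ s ≠ 0 := sub_ne_zero.2 (Ne.symm hu)
  exact hδ <| FiniteField.pow_norm_exponent_eq_one_of_mul_pow_eq hK hw ht
    (sub_pow_mul_pow_eq_of_mul_lunardonPolverino_eq hK ht h)

/-- If `N(δ) ≠ 1`, the Lunardon–Polverino binomial `x ↦ x^σ + δ x^(σ^(n-1))`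
is scattered. -/
theorem stmt_1 (q n s : ℕ) (hq : IsPrimePow q) (hn : 3 ≤ n) (hs : 0 < s)
    (hsn : Nat.Coprime s n) (K : Type*) [Field K] [Fintype K]
    (hK : Fintype.card K = q ^ n) (δ : K)
    (hδ : δ ^ ((q ^ n - 1) / (q - 1)) ≠ 1) :
    ∀ x t : K, x ≠ 0 → t ≠ 0 →
      x * (t ^ (q ^ s) + δ * t ^ ((q ^ s) ^ (n - 1))) =
        t * (x ^ (q ^ s) + δ * x ^ ((q ^ s) ^ (n - 1))) →
      ∃ c : K, c ^ q = c ∧ x = c * t :=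
  stmt_1_general q n s hsn K hK δ hδ
end

section
/- Let z ∈ K. If ∑_{i=0}^{n−1} z^(e_i) = 0, where e_i = ∑_{j=0}^{i−1} σ^j, then z ≠ 0 and N(z) = 1. -/
/-- Frobenius telescoping: if the sum of `z^{e_i}` vanishes, then `z^{e_n} = 1`. -/
lemma aux_pow_sum {K : Type*} [Field K] (p m : ℕ) [ExpChar K p] (z : K) (n : ℕ)
    (hz : (∑ i ∈ Finset.range n, z ^ (∑ j ∈ Finset.range i, (p ^ m) ^ j)) = 0) :
    z ^ (∑ j ∈ Finset.range n, (p ^ m) ^ j) = 1 := by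
  have hfrob := map_sum (iterateFrobenius K p m)
    (fun i => z ^ (∑ j ∈ Finset.range i, (p ^ m) ^ j)) (Finset.range n)
  rw [hz, map_zero] at hfrob
  simp only [iterateFrobenius_def] at hfrob
  have h2 : (0 : K)
      = ∑ i ∈ Finset.range n, z * (z ^ (∑ j ∈ Finset.range i, (p ^ m) ^ j)) ^ (p ^ m) := by
    rw [← Finset.mul_sum, ← hfrob, mul_zero]
  have h3 : ∀ i ∈ Finset.range n,
      z * (z ^ (∑ j ∈ Finset.range i, (p ^ m) ^ j)) ^ (p ^ m)
        = z ^ (∑ j ∈ Finset.range (i + 1), (p ^ m) ^ j) := by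
    intro i _
    rw [← pow_mul, ← pow_succ']
    congr 1
    rw [Finset.sum_range_succ', pow_zero]
    simp [pow_succ, Finset.mul_sum, mul_comm]
  rw [Finset.sum_congr rfl h3] at h2
  have h4 : (∑ i ∈ Finset.range (n + 1), z ^ (∑ j ∈ Finset.range i, (p ^ m) ^ j))
      = z ^ (∑ j ∈ Finset.range n, (p ^ m) ^ j) := by
    rw [Finset.sum_range_succ, hz, zero_add]
  rw [Finset.sum_range_succ'] at h4
  simp only [Finset.range_zero, Finset.sum_empty, pow_zero] at h4
  rw [← h2, zero_add] at h4
  exact h4.symm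

/-- If `∑_{i=0}^{n-1} z^{e_i} = 0`, then `z ≠ 0` and `N(z) = 1`. -/
theorem stmt_4 (q n s : ℕ) (hq : IsPrimePow q) (hn : 3 ≤ n) (hs : 0 < s)
    (hsn : Nat.Coprime s n) (K : Type*) [Field K] [Fintype K]
    (hK : Fintype.card K = q ^ n) (z : K)
    (hz : (∑ i ∈ Finset.range n, z ^ (∑ j ∈ Finset.range i, (q ^ s) ^ j)) = 0) :
    z ≠ 0 ∧ z ^ ((q ^ n - 1) / (q - 1)) = 1 := by
  obtain ⟨p, k, hpp, hk, rfl⟩ := hq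
  have hp : p.Prime := hpp.nat_prime
  have hq2 : 2 ≤ p ^ k := hp.two_le.trans (Nat.le_self_pow (by omega) p)
  -- z ≠ 0
  have hzne : z ≠ 0 := by
    rintro rfl
    rw [Finset.sum_eq_single 0 (fun i _ hne => by
        rw [zero_pow (Finset.sum_pos (fun j _ => pow_pos (pow_pos (pow_pos hp.pos k) s) j)
          (Finset.nonempty_range_iff.mpr hne)).ne'])
      (fun h => absurd (Finset.mem_range.mpr (by omega)) h)] at hz
    simp at hz
  -- characteristic of K is p
  have hcard : Fintype.card K = p ^ (k * n) := by rw [hK, ← pow_mul]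
  haveI hcharK : CharP K p := by
    haveI h1 : CharP K (ringChar K) := ringChar.charP K
    have h2 : (ringChar K).Prime := CharP.char_is_prime K _
    obtain ⟨m, _, hm⟩ := FiniteField.card K (ringChar K)
    have hdvd : ringChar K ∣ p ^ (k * n) := by
      rw [← hcard, hm]
      exact dvd_pow_self _ (by positivity)
    have : ringChar K = p := (Nat.prime_dvd_prime_iff_eq h2 hp).mp (h2.dvd_of_dvd_pow hdvd)
    rwa [this] at h1
  haveI : Fact p.Prime := ⟨hp⟩
  -- key : z ^ e_n = 1
  rw [show ((p ^ k) ^ s) = p ^ (k * s) from (pow_mul p k s).symm] at hz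
  have key := aux_pow_sum p (k * s) z n hz
  -- set up modulus
  set m : ℕ := (p ^ k) ^ n - 1 with hm_def
  have hm1 : m + 1 = (p ^ k) ^ n := by
    have : 1 ≤ (p ^ k) ^ n := Nat.one_le_pow _ _ (by omega)
    omega
  have hzm : z ^ m = 1 := by
    have := FiniteField.pow_card_sub_one_eq_one z hzne
    rwa [hK] at this
  have hpowmod : ∀ a : ℕ, z ^ a = z ^ (a % m) := by
    intro a
    conv_lhs => rw [← Nat.div_add_mod a m]
    rw [pow_add, pow_mul, hzm, one_pow, one_mul]
  -- the geometric sum identity in ℕ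
  have hE : ((p ^ k) - 1) * (∑ j ∈ Finset.range n, (p ^ k) ^ j) = (p ^ k) ^ n - 1 := by
    have h1 : (1 : ℕ) ≤ p ^ k := by omega
    have h1n : (1 : ℕ) ≤ (p ^ k) ^ n := Nat.one_le_pow _ _ (by omega)
    zify [h1, h1n]
    push_cast
    rw [mul_comm, geom_sum_mul]
  have hdiv : ((p ^ k) ^ n - 1) / ((p ^ k) - 1) = ∑ j ∈ Finset.range n, (p ^ k) ^ j := by
    rw [← hE, Nat.mul_div_cancel_left _ (by omega : 0 < (p ^ k) - 1)]
  -- congruence of exponents mod m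
  haveI : NeZero n := ⟨by omega⟩
  have hu : ((p : ZMod m) ^ k) ^ n = 1 := by
    have : (((p ^ k) ^ n : ℕ) : ZMod m) = 1 := by
      rw [← hm1]
      push_cast
      rw [ZMod.natCast_self, zero_add]
    push_cast at this
    exact this
  have hstep : ∀ a : ℕ, ((p : ZMod m) ^ k) ^ a = ((p : ZMod m) ^ k) ^ (a % n) := by
    intro a
    conv_lhs => rw [← Nat.div_add_mod a n]
    rw [pow_add, pow_mul, hu, one_pow, one_mul]
  have hsu : Function.Bijective (fun x : ZMod n => (s : ZMod n) * x) := by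
    have := (ZMod.unitOfCoprime s hsn).mulLeft_bijective
    simpa [ZMod.coe_unitOfCoprime] using this
  have hcong : (∑ j ∈ Finset.range n, (p ^ (k * s)) ^ j)
      ≡ (∑ j ∈ Finset.range n, (p ^ k) ^ j) [MOD m] := by
    rw [← ZMod.natCast_eq_natCast_iff]
    push_cast
    calc (∑ j ∈ Finset.range n, ((p : ZMod m) ^ (k * s)) ^ j)
        = ∑ j ∈ Finset.range n, ((p : ZMod m) ^ k) ^ ((s * j) % n) := by
          refine Finset.sum_congr rfl fun j _ => ?_
          rw [← hstep, ← pow_mul, ← pow_mul, mul_assoc]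
      _ = ∑ x : ZMod n, ((p : ZMod m) ^ k) ^ (((s : ZMod n) * x).val) := by
          refine Finset.sum_nbij' (fun j => (j : ZMod n)) (fun x => x.val)
            (fun _ _ => Finset.mem_univ _)
            (fun x _ => Finset.mem_range.mpr (ZMod.val_lt x))
            (fun j hj => by
              simp [ZMod.val_natCast, Nat.mod_eq_of_lt (Finset.mem_range.mp hj)])
            (fun x _ => by simp [ZMod.natCast_val, ZMod.cast_id])
            (fun j hj => ?_)
          congr 1
          rw [ZMod.val_mul, ZMod.val_natCast, ZMod.val_natCast]
          exact Nat.mul_mod s j n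
      _ = ∑ x : ZMod n, ((p : ZMod m) ^ k) ^ (x.val) := by
          exact Fintype.sum_bijective _ hsu _ _ (fun x => rfl)
      _ = ∑ j ∈ Finset.range n, ((p : ZMod m) ^ k) ^ j := by
          refine Finset.sum_nbij' (fun x : ZMod n => x.val) (fun j => (j : ZMod n))
            (fun x _ => Finset.mem_range.mpr (ZMod.val_lt x))
            (fun _ _ => Finset.mem_univ _)
            (fun x _ => by simp [ZMod.natCast_val, ZMod.cast_id])
            (fun j hj => by
              simp [ZMod.val_natCast, Nat.mod_eq_of_lt (Finset.mem_range.mp hj)])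
            (fun x _ => rfl)
  refine ⟨hzne, ?_⟩
  rw [hdiv, hpowmod, ← hcong, ← hpowmod]
  exact key
end

section
/- Let b₁, b₂ ∈ K with N(b₁) = N(b₂). Then the polynomial f₁(x) = x^σ + b₁·x^(σ²) is scattered if and only if f₂(x) = x^σ + b₂·x^(σ²) is scattered. -/
/-!
The substitution `x ↦ u x` turns `x^σ + b x^(σ²)` into `u^σ (x^σ + b u^(σ(σ-1)) x^(σ²))`, and
scatteredness is invariant under such rescalings, so it suffices that `b₂ / b₁` is a
`σ(σ-1)`-th power. Since `gcd(σ(σ-1), q^n - 1) = q - 1` when `gcd(s, n) = 1`, the `σ(σ-1)`-th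
powers of the cyclic group `Kˣ` are exactly the elements of norm `1`.
-/

theorem IsCyclic.range_powMonoidHom_eq_ker {G : Type*} [CommGroup G] [IsCyclic G] [Finite G]
    (k : ℕ) :
    (powMonoidHom k : G →* G).range =
      (powMonoidHom (Nat.card G / (Nat.card G).gcd k) : G →* G).ker := by
  have hdvd : Nat.card G / (Nat.card G).gcd k ∣ Nat.card G :=
    Nat.div_dvd_of_dvd (Nat.gcd_dvd_left _ _)
  refine Subgroup.eq_of_le_of_card_ge ?_ ?_
  · rintro _ ⟨g, rfl⟩
    have hk : k * (Nat.card G / (Nat.card G).gcd k) = k / (Nat.card G).gcd k * Nat.card G := by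
      rw [← Nat.mul_div_assoc _ (Nat.gcd_dvd_left _ _),
        Nat.div_mul_right_comm (Nat.gcd_dvd_right _ _)]
    simp only [MonoidHom.mem_ker, powMonoidHom_apply, ← pow_mul, hk, pow_mul', pow_card_eq_one',
      one_pow]
  · rw [IsCyclic.card_powMonoidHom_ker, IsCyclic.card_powMonoidHom_range, Nat.gcd_eq_right hdvd]

theorem FiniteField.exists_eq_mul_pow_of_pow_eq_pow {K : Type*} [Field K] [Finite K] (k : ℕ)
    {a b : K}
    (h : a ^ ((Nat.card K - 1) / (Nat.card K - 1).gcd k) =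
      b ^ ((Nat.card K - 1) / (Nat.card K - 1).gcd k)) :
    ∃ u : K, u ≠ 0 ∧ b = a * u ^ k := by
  have hrange := IsCyclic.range_powMonoidHom_eq_ker (G := Kˣ) k
  rw [Nat.card_units] at hrange
  set e := (Nat.card K - 1) / (Nat.card K - 1).gcd k
  have he : e ≠ 0 := by
    have : 0 < Nat.card K - 1 := by have := Finite.one_lt_card (α := K); omega
    exact (Nat.div_pos (Nat.gcd_le_left _ this) (Nat.gcd_pos_of_pos_left _ this)).ne'
  rcases eq_or_ne a 0 with rfl | ha
  · refine ⟨1, one_ne_zero, ?_⟩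
    rw [zero_pow he, eq_comm, pow_eq_zero_iff he] at h
    rw [h, zero_mul]
  have hb : b ≠ 0 := by
    rintro rfl
    exact ha (pow_eq_zero_iff he |>.mp (h.trans (zero_pow he)))
  have hmem : Units.mk0 b hb / Units.mk0 a ha ∈ (powMonoidHom e : Kˣ →* Kˣ).ker := by
    rw [MonoidHom.mem_ker, powMonoidHom_apply, div_pow, div_eq_one, Units.ext_iff]
    simpa using h.symm
  rw [← hrange] at hmem
  obtain ⟨u, hu⟩ := hmem
  refine ⟨u, u.ne_zero, ?_⟩
  rw [powMonoidHom_apply, eq_div_iff_mul_eq', Units.ext_iff] at hu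
  simpa [eq_comm, mul_comm] using hu

theorem Nat.gcd_pow_sub_one_pow_mul_pow_sub_one {q n s : ℕ} (hq : 0 < q) (hn : n ≠ 0)
    (hsn : s.Coprime n) :
    (q ^ n - 1).gcd (q ^ s * (q ^ s - 1)) = q - 1 := by
  have hpos : 1 ≤ q ^ n := Nat.one_le_pow _ _ hq
  have hcop : (q ^ s).Coprime (q ^ n - 1) := by
    refine Nat.Coprime.pow_left s (Nat.Coprime.coprime_dvd_left (dvd_pow_self q hn) ?_)
    rw [Nat.coprime_self_sub_right hpos]
    exact Nat.coprime_one_right _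
  rw [hcop.gcd_mul_left_cancel_right, Nat.pow_sub_one_gcd_pow_sub_one, Nat.gcd_comm, hsn, pow_one]

section Scattered

variable {K : Type*} [Field K]

def IsScattered (q : ℕ) (f : K → K) : Prop :=
  ∀ x t : K, x ≠ 0 → t ≠ 0 → x * f t = t * f x → ∃ c : K, c ^ q = c ∧ x = c * t

variable {q : ℕ}

theorem IsScattered.mul_comp_mul {f : K → K} (hf : IsScattered q f) {a u : K} (ha : a ≠ 0)
    (hu : u ≠ 0) : IsScattered q fun y => a * f (u * y) := by
  intro x t hx ht hxt
  have hxt' : u * x * f (u * t) = u * t * f (u * x) := by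
    apply mul_left_cancel₀ ha
    linear_combination u * hxt
  obtain ⟨c, hc, hct⟩ := hf (u * x) (u * t) (mul_ne_zero hu hx) (mul_ne_zero hu ht) hxt'
  exact ⟨c, hc, mul_left_cancel₀ hu (by rw [hct]; ring)⟩

theorem isScattered_mul_comp_mul_iff {f : K → K} {a u : K} (ha : a ≠ 0) (hu : u ≠ 0) :
    (IsScattered q fun y => a * f (u * y)) ↔ IsScattered q f := by
  refine ⟨fun hf => ?_, fun hf => hf.mul_comp_mul ha hu⟩
  convert hf.mul_comp_mul (inv_ne_zero ha) (inv_ne_zero hu) using 2 with y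
  field_simp

theorem isScattered_binomial_mul_pow_iff {σ : ℕ} (hσ : σ ≠ 0) (b : K) {u : K} (hu : u ≠ 0) :
    (IsScattered q fun x => x ^ σ + b * u ^ (σ * (σ - 1)) * x ^ (σ ^ 2)) ↔
      IsScattered q fun x => x ^ σ + b * x ^ (σ ^ 2) := by
  have hσ2 : σ ^ 2 = σ + σ * (σ - 1) := by
    obtain ⟨τ, rfl⟩ := Nat.exists_eq_add_one_of_ne_zero hσ
    simp only [add_tsub_cancel_right]
    ring
  convert isScattered_mul_comp_mul_iff (inv_ne_zero (pow_ne_zero σ hu)) hu using 2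
  funext x
  field_simp
  rw [mul_pow, mul_pow, hσ2, pow_add, pow_add]
  ring

end Scattered

theorem stmt_6_general (q n s : ℕ) (hq : IsPrimePow q) (hn : 3 ≤ n)
    (hsn : Nat.Coprime s n) (K : Type*) [Field K] [Fintype K]
    (hK : Fintype.card K = q ^ n) (b₁ b₂ : K)
    (hb : b₁ ^ ((q ^ n - 1) / (q - 1)) = b₂ ^ ((q ^ n - 1) / (q - 1))) :
    (∀ x t : K, x ≠ 0 → t ≠ 0 →
      x * (t ^ (q ^ s) + b₁ * t ^ ((q ^ s) ^ 2)) =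
        t * (x ^ (q ^ s) + b₁ * x ^ ((q ^ s) ^ 2)) →
      ∃ c : K, c ^ q = c ∧ x = c * t) ↔
    (∀ x t : K, x ≠ 0 → t ≠ 0 →
      x * (t ^ (q ^ s) + b₂ * t ^ ((q ^ s) ^ 2)) =
        t * (x ^ (q ^ s) + b₂ * x ^ ((q ^ s) ^ 2)) →
      ∃ c : K, c ^ q = c ∧ x = c * t) := by
  obtain ⟨u, hu, rfl⟩ : ∃ u : K, u ≠ 0 ∧ b₂ = b₁ * u ^ (q ^ s * (q ^ s - 1)) := by
    apply FiniteField.exists_eq_mul_pow_of_pow_eq_pow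
    rwa [Nat.card_eq_fintype_card, hK,
      Nat.gcd_pow_sub_one_pow_mul_pow_sub_one hq.pos (by omega) hsn]
  exact (isScattered_binomial_mul_pow_iff (pow_ne_zero s hq.pos.ne') b₁ hu).symm

/-- If `N(b₁) = N(b₂)`, then `x^σ + b₁ x^(σ²)` is scattered iff
`x^σ + b₂ x^(σ²)` is. -/
theorem stmt_6 (q n s : ℕ) (hq : IsPrimePow q) (hn : 3 ≤ n) (hs : 0 < s)
    (hsn : Nat.Coprime s n) (K : Type*) [Field K] [Fintype K]
    (hK : Fintype.card K = q ^ n) (b₁ b₂ : K)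
    (hb : b₁ ^ ((q ^ n - 1) / (q - 1)) = b₂ ^ ((q ^ n - 1) / (q - 1))) :
    (∀ x t : K, x ≠ 0 → t ≠ 0 →
      x * (t ^ (q ^ s) + b₁ * t ^ ((q ^ s) ^ 2)) =
        t * (x ^ (q ^ s) + b₁ * x ^ ((q ^ s) ^ 2)) →
      ∃ c : K, c ^ q = c ∧ x = c * t) ↔
    (∀ x t : K, x ≠ 0 → t ≠ 0 →
      x * (t ^ (q ^ s) + b₂ * t ^ ((q ^ s) ^ 2)) =
        t * (x ^ (q ^ s) + b₂ * x ^ ((q ^ s) ^ 2)) →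
      ∃ c : K, c ^ q = c ∧ x = c * t) :=
  stmt_6_general q n s hq hn hsn K hK b₁ b₂ hb
end

section
/- Let b ∈ K be nonzero. The polynomial f(x) = x^σ + b·x^(σ²) is not scattered if and only if there exist nonzero x₀, y₀ ∈ K such that b^(−1)·x₀^(q−1) + y₀^(σ−1) + 1 = 0 and Tr(y₀) = 0. -/
/-!
Write `σ = q ^ s`, `f x = x ^ σ + b * x ^ σ ^ 2`, `x = w * t` and `y = w ^ σ - w`. Because
`z ↦ z ^ σ` is additive, `w ^ σ ^ 2 - w = y ^ σ + y`, so
`t * f (w * t) - w * t * f t = t * y * (t ^ σ + b * t ^ σ ^ 2 * (y ^ (σ - 1) + 1))`; and since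
`gcd s n = 1`, `w` is fixed by `z ↦ z ^ q` iff `y = 0`. Two surjectivity facts turn the vanishing
of the last factor into the curve equation. The elements `w ^ σ - w` are exactly those of trace
zero: the image of `w ↦ w ^ σ - w`, whose kernel is `𝔽_q`, is as large as the kernel of the trace,
a polynomial of degree `q ^ (n - 1)`. And `t ^ (σ - σ ^ 2)` runs over all `x₀ ^ (q - 1)`: in `Kˣ`
the image of `z ↦ z ^ d` depends only on `gcd d (q ^ n - 1)`, which is `q - 1` for both
`d = σ - 1` and `d = q - 1`.
-/

open Polynomial Function Finset

section Monoid

variable {M : Type*} [Monoid M] {q m n s : ℕ} {z : M}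

theorem isPeriodicPt_pow_iff_s8 : IsPeriodicPt (· ^ q) m z ↔ z ^ q ^ m = z := by
  rw [IsPeriodicPt, IsFixedPt, pow_iterate]

theorem pow_pow_mul_eq_self (hz : z ^ q ^ n = z) (m : ℕ) : z ^ q ^ (n * m) = z :=
  isPeriodicPt_pow_iff_s8.1 ((isPeriodicPt_pow_iff_s8.2 hz).mul_const m)

theorem exists_pow_pow_eq (hz : z ^ q ^ n = z) (hn : n ≠ 0) (s : ℕ) : ∃ t : M, t ^ q ^ s = z :=
  ⟨z ^ q ^ ((n - 1) * s), by
    rw [← pow_mul, ← pow_add, ← add_one_mul, Nat.sub_add_cancel (Nat.one_le_iff_ne_zero.2 hn),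
      pow_pow_mul_eq_self hz]⟩

theorem pow_pow_eq_self_iff_of_coprime (hz : z ^ q ^ n = z) (hsn : s.Coprime n) :
    z ^ q ^ s = z ↔ z ^ q = z := by
  refine ⟨fun h => ?_, fun h => isPeriodicPt_pow_iff_s8.1 (IsFixedPt.isPeriodicPt h s)⟩
  simpa [hsn.gcd_eq_one] using
    isPeriodicPt_pow_iff_s8.1 ((isPeriodicPt_pow_iff_s8.2 h).gcd (isPeriodicPt_pow_iff_s8.2 hz))

end Monoid

section Ring

variable {R : Type*} [Ring R] {q n : ℕ} {z : R}

def frobeniusTrace (q n : ℕ) (z : R) : R :=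
  ∑ i ∈ range n, z ^ q ^ i

theorem frobeniusTrace_pow (hz : z ^ q ^ n = z) :
    frobeniusTrace q n (z ^ q) = frobeniusTrace q n z := by
  have h := (sum_range_succ' (fun i => z ^ q ^ i) n).symm.trans (sum_range_succ _ n)
  simp only [pow_zero, pow_one, hz] at h
  simp only [frobeniusTrace, ← pow_mul, ← pow_succ']
  exact add_right_cancel h

theorem frobeniusTrace_pow_pow (hz : z ^ q ^ n = z) (s : ℕ) :
    frobeniusTrace q n (z ^ q ^ s) = frobeniusTrace q n z := by
  induction s with
  | zero => rw [pow_zero, pow_one]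
  | succ s ih => rw [pow_succ, pow_mul, frobeniusTrace_pow (by rw [pow_right_comm, hz]), ih]

end Ring

section CommRing

variable {R : Type*} [CommRing R] {q n : ℕ}

theorem add_pow_pow (hadd : ∀ a b : R, (a + b) ^ q = a ^ q + b ^ q) (i : ℕ) (a b : R) :
    (a + b) ^ q ^ i = a ^ q ^ i + b ^ q ^ i := by
  induction i with
  | zero => simp
  | succ i ih => rw [pow_succ, pow_mul, pow_mul, pow_mul, ih, hadd]

theorem sub_pow_pow (hadd : ∀ a b : R, (a + b) ^ q = a ^ q + b ^ q) (i : ℕ) (a b : R) :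
    (a - b) ^ q ^ i = a ^ q ^ i - b ^ q ^ i :=
  eq_sub_of_add_eq (by rw [← add_pow_pow hadd, sub_add_cancel])

theorem frobeniusTrace_add (hadd : ∀ a b : R, (a + b) ^ q = a ^ q + b ^ q) (a b : R) :
    frobeniusTrace q n (a + b) = frobeniusTrace q n a + frobeniusTrace q n b := by
  simp only [frobeniusTrace, add_pow_pow hadd, sum_add_distrib]

theorem frobeniusTrace_pow_pow_sub_self (hadd : ∀ a b : R, (a + b) ^ q = a ^ q + b ^ q)
    {w : R} (hw : w ^ q ^ n = w) (s : ℕ) : frobeniusTrace q n (w ^ q ^ s - w) = 0 := by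
  simp only [frobeniusTrace, sub_pow_pow hadd, sum_sub_distrib]
  exact sub_eq_zero.2 (frobeniusTrace_pow_pow hw s)

def linearizedBinomial (σ : ℕ) (b x : R) : R :=
  x ^ σ + b * x ^ σ ^ 2

theorem linearizedBinomial_cross_sub {σ : ℕ} (hσ : σ ≠ 0) (b w t : R)
    (hw : (w ^ σ - w) ^ σ = (w ^ σ) ^ σ - w ^ σ) :
    t * linearizedBinomial σ b (w * t) - w * t * linearizedBinomial σ b t =
      t * (w ^ σ - w) * (t ^ σ + b * (t ^ σ) ^ σ * ((w ^ σ - w) ^ (σ - 1) + 1)) := by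
  have hy := pow_sub_one_mul hσ (w ^ σ - w)
  unfold linearizedBinomial
  linear_combination -(b * t ^ (σ ^ 2 + 1)) * (hw + hy)

end CommRing

section Polynomial

theorem card_le_natDegree_of_forall_isRoot {R : Type*} [CommRing R] [IsDomain R] {P : R[X]}
    (hP : P ≠ 0) {S : Set R} (hS : ∀ z ∈ S, P.IsRoot z) : Nat.card S ≤ P.natDegree := by
  classical
  calc Nat.card S ≤ Nat.card (P.roots.toFinset : Set R) :=
        Nat.card_mono P.roots.toFinset.finite_toSet fun z hz => by simpa [hP] using hS z hz
    _ = #P.roots.toFinset := Nat.card_coe_set_eq _ |>.trans (Set.ncard_coe_finset _)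
    _ ≤ P.natDegree := (Multiset.toFinset_card_le _).trans (card_roots' P)

theorem degree_sum_X_pow_pow {R : Type*} [Semiring R] [Nontrivial R] {q : ℕ} (hq : 1 < q)
    (m : ℕ) : (∑ i ∈ range (m + 1), (X : R[X]) ^ q ^ i).degree = (q ^ m : ℕ) := by
  induction m with
  | zero => simp
  | succ m ih =>
    rw [sum_range_succ, degree_add_eq_right_of_degree_lt] <;> rw [degree_X_pow]
    rw [ih, Nat.cast_lt]
    exact Nat.pow_lt_pow_right hq m.lt_succ_self

end Polynomial

section Group

variable {G : Type*} [CommGroup G]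

theorem range_powMonoidHom_eq_range_gcd_card (d : ℕ) :
    (powMonoidHom d : G →* G).range = (powMonoidHom (d.gcd (Nat.card G))).range := by
  apply le_antisymm
  · rintro _ ⟨x, rfl⟩
    refine ⟨x ^ (d / d.gcd (Nat.card G)), ?_⟩
    simp only [powMonoidHom_apply, ← pow_mul, Nat.div_mul_cancel (Nat.gcd_dvd_left _ _)]
  · rintro _ ⟨x, rfl⟩
    refine ⟨x ^ d.gcdA (Nat.card G), ?_⟩
    simp only [powMonoidHom_apply]
    rw [← zpow_natCast, ← zpow_mul, ← zpow_natCast x, Nat.gcd_eq_gcd_ab, zpow_add,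
      zpow_mul x (Nat.card G : ℤ), zpow_natCast x, pow_card_eq_one', one_zpow, mul_one, mul_comm]

theorem range_powMonoidHom_pow_sub_one_eq {q n s t : ℕ} (hG : Nat.card G = q ^ n - 1)
    (hst : s.gcd n = t.gcd n) :
    (powMonoidHom (q ^ s - 1) : G →* G).range = (powMonoidHom (q ^ t - 1)).range := by
  rw [range_powMonoidHom_eq_range_gcd_card, range_powMonoidHom_eq_range_gcd_card (q ^ t - 1), hG,
    Nat.pow_sub_one_gcd_pow_sub_one, Nat.pow_sub_one_gcd_pow_sub_one, hst]

end Group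

section Field

variable {K : Type*} [Field K] {q n : ℕ}

theorem card_setOf_frobeniusTrace_eq_zero_le (hq : 1 < q) (hn : n ≠ 0) :
    Nat.card {z : K | frobeniusTrace q n z = 0} ≤ q ^ (n - 1) := by
  obtain ⟨m, rfl⟩ := Nat.exists_eq_add_one_of_ne_zero hn
  have hdeg := degree_sum_X_pow_pow (R := K) hq m
  rw [Nat.add_sub_cancel, ← natDegree_eq_of_degree_eq_some hdeg]
  refine card_le_natDegree_of_forall_isRoot (fun h => ?_) fun z hz => ?_
  · rw [h, degree_zero] at hdeg
    exact WithBot.bot_ne_coe hdeg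
  · simpa [frobeniusTrace, eval_finsetSum] using hz

theorem exists_pow_sub_one_mul_pow_pow_eq_self_of_ne_zero {s : ℕ} (hq : q ≠ 0) {T : K}
    (hT : T ≠ 0) : ∃ x ≠ 0, x ^ (q - 1) * T ^ q ^ s = T := by
  refine ⟨T⁻¹ ^ ((q ^ s - 1) / (q - 1)), pow_ne_zero _ (inv_ne_zero hT), ?_⟩
  rw [← pow_mul, Nat.div_mul_cancel (Nat.sub_one_dvd_pow_sub_one q s),
    ← pow_sub_one_mul (by positivity) T, ← mul_assoc, ← mul_pow, inv_mul_cancel₀ hT, one_pow,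
    one_mul]

theorem add_mul_mul_add_one_eq_zero_iff {b c T X Y : K} (hb : b ≠ 0) (hc : c ≠ 0)
    (hT : X * c = T) : T + b * c * (Y + 1) = 0 ↔ b⁻¹ * X + Y + 1 = 0 := by
  have h : T + b * c * (Y + 1) = b * c * (b⁻¹ * X + Y + 1) := by
    rw [← hT]; field_simp; ring
  rw [h, mul_eq_zero_iff_left (mul_ne_zero hb hc)]

theorem mul_linearizedBinomial_eq_iff {σ : ℕ} (hσ : σ ≠ 0) {b w t X : K}
    (hb : b ≠ 0) (ht : t ≠ 0) (hw : w ^ σ - w ≠ 0)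
    (hsub : (w ^ σ - w) ^ σ = (w ^ σ) ^ σ - w ^ σ) (hX : X * (t ^ σ) ^ σ = t ^ σ) :
    w * t * linearizedBinomial σ b t = t * linearizedBinomial σ b (w * t) ↔
      b⁻¹ * X + (w ^ σ - w) ^ (σ - 1) + 1 = 0 := by
  rw [eq_comm, ← sub_eq_zero, linearizedBinomial_cross_sub hσ b w t hsub,
    mul_eq_zero_iff_left (mul_ne_zero ht hw),
    add_mul_mul_add_one_eq_zero_iff hb (pow_ne_zero _ (pow_ne_zero _ ht)) hX]

end Field

section FiniteField

variable {K : Type*} [Field K] [Fintype K] {q n s : ℕ}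

theorem add_pow_eq_of_card_eq_pow (hq : IsPrimePow q) (hn : n ≠ 0)
    (hK : Fintype.card K = q ^ n) (a b : K) : (a + b) ^ q = a ^ q + b ^ q := by
  obtain ⟨p, k, hp, hk, rfl⟩ := hq
  obtain ⟨r, _, m, hr, hcard⟩ := FiniteField.card' K
  obtain ⟨rfl, -⟩ := hp.nat_prime.pow_inj' hr (Nat.mul_ne_zero hk.ne' hn) m.ne_zero
    (by rw [pow_mul, ← hK, hcard])
  have := Fact.mk hr
  exact add_pow_char_pow a b _ k

theorem exists_pow_pow_sub_self_eq_of_frobeniusTrace_eq_zero (hK : Fintype.card K = q ^ n)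
    (hq : 1 < q) (hn : n ≠ 0) (hadd : ∀ a b : K, (a + b) ^ q = a ^ q + b ^ q) (hsn : s.Coprime n)
    {y : K} (hy : frobeniusTrace q n y = 0) : ∃ w : K, w ^ q ^ s - w = y := by
  have hz (z : K) : z ^ q ^ n = z := hK ▸ FiniteField.pow_card z
  let φ : K →+ K := AddMonoidHom.mk' (fun z => z ^ q ^ s - z) fun a b => by
    simp only [add_pow_pow hadd]; ring
  let τ : K →+ K := AddMonoidHom.mk' (frobeniusTrace q n) (frobeniusTrace_add hadd)
  have hφτ : φ.range ≤ τ.ker := by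
    rintro _ ⟨w, rfl⟩
    exact frobeniusTrace_pow_pow_sub_self hadd (hz w) s
  have hφ : Nat.card φ.ker ≤ q := by
    rw [← FiniteField.X_pow_card_sub_X_natDegree_eq K hq]
    refine card_le_natDegree_of_forall_isRoot (FiniteField.X_pow_card_sub_X_ne_zero K hq)
      fun z hz' => ?_
    have : z ^ q = z := (pow_pow_eq_self_iff_of_coprime (hz z) hsn).1 (sub_eq_zero.1 hz')
    simp [this]
  have hτ : Nat.card τ.ker ≤ q ^ (n - 1) := card_setOf_frobeniusTrace_eq_zero_le hq hn
  have hcard : Nat.card φ.ker * Nat.card φ.range = q * q ^ (n - 1) := by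
    rw [← AddSubgroup.index_ker, AddSubgroup.card_mul_index, Nat.card_eq_fintype_card, hK,
      ← pow_succ', Nat.sub_add_cancel (Nat.one_le_iff_ne_zero.2 hn)]
  have hrange : q ^ (n - 1) ≤ Nat.card φ.range :=
    Nat.le_of_mul_le_mul_left (hcard ▸ Nat.mul_le_mul_right _ hφ) (by omega)
  obtain ⟨w, hw⟩ : y ∈ φ.range :=
    (AddSubgroup.eq_of_le_of_card_ge hφτ (hτ.trans hrange)) ▸ AddMonoidHom.mem_ker.2 hy
  exact ⟨w, hw⟩

theorem exists_pow_sub_one_mul_pow_pow_eq_self_of_coprime (hK : Fintype.card K = q ^ n)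
    (hq : q ≠ 0) (hsn : s.Coprime n) {x : K} (hx : x ≠ 0) :
    ∃ T ≠ 0, x ^ (q - 1) * T ^ q ^ s = T := by
  have hG : Nat.card Kˣ = q ^ n - 1 := by rw [Nat.card_units, Nat.card_eq_fintype_card, hK]
  have hrange := range_powMonoidHom_pow_sub_one_eq (t := 1) hG
    (by rw [hsn.gcd_eq_one, Nat.gcd_one_left])
  obtain ⟨u, hu⟩ : (Units.mk0 x hx)⁻¹ ^ (q ^ 1 - 1) ∈ (powMonoidHom (q ^ s - 1)).range :=
    hrange ▸ ⟨_, rfl⟩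
  refine ⟨u, u.ne_zero, ?_⟩
  have hu' : (u : K) ^ (q ^ s - 1) = x⁻¹ ^ (q - 1) := by simpa using congrArg Units.val hu
  rw [← pow_sub_one_mul (by positivity) (u : K), hu', ← mul_assoc, ← mul_pow,
    mul_inv_cancel₀ hx, one_pow, one_mul]

end FiniteField

theorem stmt_8_general (q n s : ℕ) (hq : IsPrimePow q) (hn : 3 ≤ n)
    (hsn : Nat.Coprime s n) (K : Type*) [Field K] [Fintype K]
    (hK : Fintype.card K = q ^ n) (b : K) (hb : b ≠ 0) :
    (¬∀ x t : K, x ≠ 0 → t ≠ 0 →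
      x * (t ^ (q ^ s) + b * t ^ ((q ^ s) ^ 2)) =
        t * (x ^ (q ^ s) + b * x ^ ((q ^ s) ^ 2)) →
      ∃ c : K, c ^ q = c ∧ x = c * t) ↔
    ∃ x₀ y₀ : K, x₀ ≠ 0 ∧ y₀ ≠ 0 ∧
      b⁻¹ * x₀ ^ (q - 1) + y₀ ^ (q ^ s - 1) + 1 = 0 ∧
      ∑ i ∈ Finset.range n, y₀ ^ (q ^ i) = 0 := by
  have hn0 : n ≠ 0 := by omega
  have hz (z : K) : z ^ q ^ n = z := hK ▸ FiniteField.pow_card z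
  have hfix (w : K) : w ^ q ^ s = w ↔ w ^ q = w := pow_pow_eq_self_iff_of_coprime (hz w) hsn
  have hadd := add_pow_eq_of_card_eq_pow hq hn0 hK
  have hσ : q ^ s ≠ 0 := pow_ne_zero s hq.ne_zero
  constructor
  · intro hns
    push Not at hns
    obtain ⟨x, t, -, ht, heq, hnc⟩ := hns
    obtain ⟨w, rfl⟩ : ∃ w, x = w * t := ⟨x / t, (div_mul_cancel₀ x ht).symm⟩
    have hy : w ^ q ^ s - w ≠ 0 := sub_ne_zero.2 fun h => hnc w ((hfix w).1 h) rfl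
    obtain ⟨x₀, hx₀, hx₀t⟩ :=
      exists_pow_sub_one_mul_pow_pow_eq_self_of_ne_zero hq.ne_zero (pow_ne_zero (q ^ s) ht)
    refine ⟨x₀, _, hx₀, hy, ?_, frobeniusTrace_pow_pow_sub_self hadd (hz w) s⟩
    exact (mul_linearizedBinomial_eq_iff hσ hb ht hy (sub_pow_pow hadd s _ _) hx₀t).1 heq
  · rintro ⟨x₀, y, hx₀, hy, hcurve, htr⟩ hscat
    obtain ⟨w, rfl⟩ :=
      exists_pow_pow_sub_self_eq_of_frobeniusTrace_eq_zero hK hq.one_lt hn0 hadd hsn htr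
    obtain ⟨T, hT, hx₀T⟩ := exists_pow_sub_one_mul_pow_pow_eq_self_of_coprime hK hq.ne_zero hsn hx₀
    obtain ⟨t, rfl⟩ := exists_pow_pow_eq (hz T) hn0 s
    have ht : t ≠ 0 := fun h => hT (by rw [h, zero_pow hσ])
    have hw : w ≠ 0 := by
      rintro rfl
      exact hy (by rw [zero_pow hσ, sub_zero])
    obtain ⟨c, hc, hwc⟩ := hscat (w * t) t (mul_ne_zero hw ht) ht
      ((mul_linearizedBinomial_eq_iff hσ hb ht hy (sub_pow_pow hadd s _ _) hx₀T).2 hcurve)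
    obtain rfl := mul_right_cancel₀ ht hwc
    exact hy (sub_eq_zero.2 ((hfix w).2 hc))

/-- `x^σ + b x^(σ²)` is not scattered iff the curve
`b⁻¹ X^(q-1) + Y^(σ-1) + 1 = 0` has a point `(x₀, y₀)` with nonzero
coordinates such that `Tr(y₀) = 0`. -/
theorem stmt_8 (q n s : ℕ) (hq : IsPrimePow q) (hn : 3 ≤ n) (hs : 0 < s)
    (hsn : Nat.Coprime s n) (K : Type*) [Field K] [Fintype K]
    (hK : Fintype.card K = q ^ n) (b : K) (hb : b ≠ 0) :
    (¬∀ x t : K, x ≠ 0 → t ≠ 0 →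
      x * (t ^ (q ^ s) + b * t ^ ((q ^ s) ^ 2)) =
        t * (x ^ (q ^ s) + b * x ^ ((q ^ s) ^ 2)) →
      ∃ c : K, c ^ q = c ∧ x = c * t) ↔
    ∃ x₀ y₀ : K, x₀ ≠ 0 ∧ y₀ ≠ 0 ∧
      b⁻¹ * x₀ ^ (q - 1) + y₀ ^ (q ^ s - 1) + 1 = 0 ∧
      ∑ i ∈ Finset.range n, y₀ ^ (q ^ i) = 0 :=
  stmt_8_general q n s hq hn hsn K hK b hb
end

section
/- Let z ∈ K and let B(z) be the (n−1)×(n−1) matrix over K with rows and columns indexed by 0,…,n−2, whose entries are: B_{i,i} = −(1+z)^(σ^i) on the diagonal, B_{i,i+1} = 1 on the superdiagonal, B_{i,i−1} = z^(σ^i) on the subdiagonal, and 0 elsewhere. Then det B(z) = (−1)^(n+1) · ∑_{i=0}^{n−1} z^(e_i), where e_i = ∑_{j=0}^{i−1} σ^j. -/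
/-- Generic "continuant" for a tridiagonal matrix with diagonal `a`,
superdiagonal `1` and subdiagonal `c`, expanded from the front. -/
private def tdCont {K : Type*} [CommRing K] : ℕ → (ℕ → K) → (ℕ → K) → K
  | 0, _, _ => 1
  | 1, a, _ => a 0
  | (m+2), a, c =>
      a 0 * tdCont (m+1) (fun i => a (i+1)) (fun i => c (i+1))
        - c 1 * tdCont m (fun i => a (i+2)) (fun i => c (i+2))

private lemma det_eq_tdCont {K : Type*} [CommRing K] :
    ∀ (m : ℕ) (a c : ℕ → K) (A : Matrix (Fin m) (Fin m) K),
    (∀ i j : Fin m, A i j =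
      if (j : ℕ) = (i : ℕ) then a (i : ℕ)
      else if (j : ℕ) = (i : ℕ) + 1 then 1
      else if (j : ℕ) + 1 = (i : ℕ) then c (i : ℕ)
      else 0) →
    A.det = tdCont m a c := by
  intro m
  induction m using Nat.strong_induction_on with
  | _ m ih =>
    match m with
    | 0 =>
      intro a c A hA
      simp [Matrix.det_fin_zero, tdCont]
    | 1 =>
      intro a c A hA
      simp [Matrix.det_fin_one, tdCont, hA]
    | (m+2) =>
      intro a c A hA
      have h0 : (A.submatrix Fin.succ (Fin.succAbove 0)).det
          = tdCont (m+1) (fun i => a (i+1)) (fun i => c (i+1)) := by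
        apply ih (m+1) (by omega)
        intro i j
        simp only [Matrix.submatrix_apply, Fin.succAbove_zero, hA, Fin.val_succ,
          add_left_inj]
      have h1 : (A.submatrix Fin.succ (Fin.succAbove 1)).det
          = c 1 * tdCont m (fun i => a (i+2)) (fun i => c (i+2)) := by
        rw [Matrix.det_succ_column_zero, Fin.sum_univ_succ]
        have hz : ∀ i : Fin m,
            (A.submatrix Fin.succ (Fin.succAbove 1)) i.succ 0 = 0 := by
          intro i
          have h10 : (1 : Fin (m+2)).succAbove 0 = 0 :=
            Fin.succ_succAbove_zero (0 : Fin (m+1))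
          rw [Matrix.submatrix_apply, h10, hA]
          simp only [Fin.val_succ, Fin.val_zero]
          have : ¬((0:ℕ) = (i:ℕ)+1+1) := by omega
          have h2 : ¬((0:ℕ) = (i:ℕ)+1+1+1) := by omega
          have h3 : ¬((0:ℕ)+1 = (i:ℕ)+1+1) := by omega
          simp [this, h2, h3]
        have hrest : ∑ i : Fin m, (-1:K) ^ ((i.succ : Fin (m+1)) : ℕ) *
            (A.submatrix Fin.succ (Fin.succAbove 1)) i.succ 0 *
            ((A.submatrix Fin.succ (Fin.succAbove 1)).submatrix
              i.succ.succAbove Fin.succ).det = 0 := by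
          apply Finset.sum_eq_zero
          intro i _
          rw [hz i]
          ring
        rw [hrest, add_zero]
        have hA10 : (A.submatrix Fin.succ (Fin.succAbove 1)) 0 0 = c 1 := by
          have h10 : (1 : Fin (m+2)).succAbove 0 = 0 :=
            Fin.succ_succAbove_zero (0 : Fin (m+1))
          rw [Matrix.submatrix_apply, h10, hA]
          norm_num
        have hminor : ((A.submatrix Fin.succ (Fin.succAbove 1)).submatrix
            (Fin.succAbove 0) Fin.succ).det
            = tdCont m (fun i => a (i+2)) (fun i => c (i+2)) := by
          apply ih m (by omega)
          intro i j
          have hcol : (1 : Fin (m+2)).succAbove j.succ = j.succ.succ := by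
            have := Fin.succ_succAbove_succ (0 : Fin (m+1)) j
            rwa [Fin.succAbove_zero] at this
          simp only [Matrix.submatrix_apply, Fin.succAbove_zero, hcol, hA,
            Fin.val_succ, add_left_inj]
        rw [hA10, hminor]
        simp
      rw [Matrix.det_succ_row_zero, Fin.sum_univ_succ, Fin.sum_univ_succ]
      have hz2 : ∀ j : Fin m, A 0 j.succ.succ = 0 := by
        intro j
        rw [hA]
        simp only [Fin.val_succ, Fin.val_zero]
        have h1 : ¬((j:ℕ)+1+1 = 0) := by omega
        have h2 : ¬((j:ℕ)+1+1 = 0+1) := by omega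
        have h3 : ¬((j:ℕ)+1+1+1 = 0) := by omega
        simp [h1, h2, h3]
      have hrest2 : ∑ j : Fin m, (-1:K) ^ (((j.succ.succ : Fin (m+2))) : ℕ) *
          A 0 j.succ.succ * (A.submatrix Fin.succ (j.succ.succ).succAbove).det
          = 0 := by
        apply Finset.sum_eq_zero
        intro j _
        rw [hz2 j]
        ring
      rw [hrest2, add_zero]
      have hA00 : A 0 0 = a 0 := by rw [hA]; norm_num
      have hA01 : A 0 1 = 1 := by
        rw [hA]
        have : ((1 : Fin (m+2)) : ℕ) = 1 := rfl
        simp [this]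
      have hone : (Fin.succ (0 : Fin (m+1))) = 1 := rfl
      rw [hone, hA00, hA01, h0, h1]
      simp only [tdCont, Fin.val_zero, Fin.val_one, pow_zero, pow_one]
      ring

private lemma tdCont_closed {K : Type*} [CommRing K] (w : ℕ → K) :
    ∀ (m t : ℕ),
      tdCont m (fun i => -(1 + w (i + t))) (fun i => w (i + t))
        = (-1 : K) ^ m *
          ∑ i ∈ Finset.range (m+1), ∏ j ∈ Finset.range i, w (j + t) := by
  intro m
  induction m using Nat.strong_induction_on with
  | _ m ih =>
    match m with
    | 0 => intro t; simp [tdCont]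
    | 1 =>
      intro t
      simp [tdCont, Finset.sum_range_succ]
      try ring
    | (m+2) =>
      intro t
      have e1 := ih (m+1) (by omega) (t+1)
      have e0 := ih m (by omega) (t+2)
      show tdCont (m+2) _ _ = _
      simp only [tdCont]
      have r1 : (fun i => -(1 + w (i + 1 + t))) = (fun i => -(1 + w (i + (t+1)))) := by
        funext i; ring_nf
      have r2 : (fun i => w (i + 1 + t)) = (fun i => w (i + (t+1))) := by
        funext i; ring_nf
      have r3 : (fun i => -(1 + w (i + 2 + t))) = (fun i => -(1 + w (i + (t+2)))) := by
        funext i; ring_nf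
      have r4 : (fun i => w (i + 2 + t)) = (fun i => w (i + (t+2))) := by
        funext i; ring_nf
      rw [r1, r2, r3, r4, e1, e0]
      -- Let T s k := ∑_{i ∈ range (k+1)} ∏_{j ∈ range i} w (j+s)
      have key : ∀ (s k : ℕ),
          ∑ i ∈ Finset.range (k+2), ∏ j ∈ Finset.range i, w (j + s)
            = 1 + w s * ∑ i ∈ Finset.range (k+1), ∏ j ∈ Finset.range i, w (j + (s+1)) := by
        intro s k
        rw [Finset.sum_range_succ' (fun i => ∏ j ∈ Finset.range i, w (j + s)) (k+1)]
        simp only [Finset.prod_range_zero]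
        rw [Finset.mul_sum, add_comm]
        congr 1
        apply Finset.sum_congr rfl
        intro i _
        rw [Finset.prod_range_succ' (fun j => w (j + s)) i]
        rw [mul_comm, Nat.zero_add]
        congr 1
        apply Finset.prod_congr rfl
        intro j _
        congr 1
        omega
      have keyt := key t (m+1)
      have keyt1 := key (t+1) m
      have hwt1 : w (0 + 1 + t) = w (t+1) := by congr 1; omega
      have hwt : w (0 + t) = w t := by congr 1; omega
      rw [hwt1, hwt, keyt, keyt1]
      have hrw : ∀ k s, (∑ i ∈ Finset.range k, ∏ j ∈ Finset.range i, w (j + s)) =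
          (∑ i ∈ Finset.range k, ∏ j ∈ Finset.range i, w (j + s)) := fun _ _ => rfl
      ring

/-- The determinant of the tridiagonal `(n-1) × (n-1)` matrix `B(z)` with
diagonal entries `-(1+z)^(σ^i)`, superdiagonal entries `1` and subdiagonal
entries `z^(σ^i)` equals `(-1)^(n+1) ∑_{i=0}^{n-1} z^{e_i}`. -/
theorem stmt_10 (q n s : ℕ) (hq : IsPrimePow q) (hn : 3 ≤ n) (hs : 0 < s)
    (hsn : Nat.Coprime s n) (K : Type*) [Field K] [Fintype K]
    (hK : Fintype.card K = q ^ n) (z : K)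
    (B : Matrix (Fin (n - 1)) (Fin (n - 1)) K)
    (hB : ∀ i j : Fin (n - 1), B i j =
      if (j : ℕ) = (i : ℕ) then -(1 + z) ^ ((q ^ s) ^ (i : ℕ))
      else if (j : ℕ) = (i : ℕ) + 1 then 1
      else if (j : ℕ) + 1 = (i : ℕ) then z ^ ((q ^ s) ^ (i : ℕ))
      else 0) :
    B.det = (-1 : K) ^ (n + 1) *
      ∑ i ∈ Finset.range n, z ^ (∑ j ∈ Finset.range i, (q ^ s) ^ j) := by
  -- Get the characteristic
  obtain ⟨p, k, hp, hk, rfl⟩ := hq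
  have hpK : (p : K) = 0 := by
    have hcard : (Fintype.card K : K) = 0 := FiniteField.cast_card_eq_zero K
    rw [hK] at hcard
    have : ((p : K)) ^ (k * n) = 0 := by
      rw [← pow_mul] at hcard
      exact_mod_cast hcard
    have hkn : k * n ≠ 0 := by positivity
    exact (pow_eq_zero_iff hkn).mp this
  have hpp : p.Prime := hp.nat_prime
  haveI : Fact p.Prime := ⟨hpp⟩
  have hrc : ringChar K = p := CharP.ringChar_of_prime_eq_zero hpp hpK
  haveI : CharP K p := hrc ▸ ringChar.charP K
  -- Frobenius: (1+z)^((p^k)^s)^i = 1 + z^((p^k)^s)^i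
  have hfrob : ∀ i : ℕ, (1 + z) ^ ((p^k) ^ s) ^ i = 1 + z ^ ((p^k) ^ s) ^ i := by
    intro i
    have he : ((p^k) ^ s) ^ i = p ^ (k * s * i) := by
      rw [← pow_mul, ← pow_mul, mul_assoc]
    rw [he, add_pow_char_pow]
    simp
  -- determinant via continuant
  have hdet : B.det = tdCont (n-1) (fun i => -(1 + z ^ ((p^k)^s) ^ (i+0)))
      (fun i => z ^ ((p^k)^s) ^ (i+0)) := by
    apply det_eq_tdCont
    intro i j
    rw [hB]
    simp only [Nat.add_zero, hfrob]
  rw [hdet, tdCont_closed (fun i => z ^ ((p^k)^s) ^ i) (n-1) 0]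
  have hn1 : n - 1 + 1 = n := by omega
  rw [hn1]
  have hsign : (-1 : K) ^ (n - 1) = (-1 : K) ^ (n + 1) := by
    have : n + 1 = (n - 1) + 2 := by omega
    rw [this, pow_add]
    norm_num
  rw [hsign]
  simp only [Nat.add_zero, Finset.prod_pow_eq_pow_sum]
end

section
/- Suppose n is even and let d ∈ K be nonzero. Then there exists a nonzero u ∈ K such that Tr(d·u^(σ+1)) = 0. -/
/-!
Let `F ⊆ K` be the subfield with `q` elements. Since `u ↦ u ^ σ` is `F`-linear,
`u ↦ Tr(d u ^ (σ + 1))` is the diagonal of the `F`-bilinear form `(u, w) ↦ Tr_{K/F}(d u ^ σ w)`,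
i.e. a quadratic form in `n ≥ 3` variables over `F`. By Chevalley–Warning the number of its
zeros is divisible by the characteristic; as `0` is one of them, there is a nonzero one.
-/

open Module

namespace LinearMap.BilinForm

open MvPolynomial

section Polynomial

variable {R M ι : Type*} [CommRing R] [AddCommGroup M] [Module R M] [Fintype ι]

noncomputable def diagPolynomial (B : LinearMap.BilinForm R M) (b : Basis ι R M) :
    MvPolynomial ι R :=
  ∑ j, ∑ k, C (B (b j) (b k)) * X j * X k

lemma isHomogeneous_diagPolynomial (B : LinearMap.BilinForm R M) (b : Basis ι R M) :
    (diagPolynomial B b).IsHomogeneous 2 :=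
  IsHomogeneous.sum _ _ _ fun j _ => IsHomogeneous.sum _ _ _ fun k _ =>
    (isHomogeneous_C_mul_X _ j).mul (isHomogeneous_X R k)

lemma eval_diagPolynomial (B : LinearMap.BilinForm R M) (b : Basis ι R M) (x : ι → R) :
    eval x (diagPolynomial B b) = B (b.equivFun.symm x) (b.equivFun.symm x) := by
  simp only [diagPolynomial, Basis.equivFun_symm_apply, map_sum, map_smul, LinearMap.sum_apply,
    LinearMap.smul_apply, smul_eq_mul, map_mul, eval_C, eval_X, Finset.mul_sum]
  rw [Finset.sum_comm]
  refine Finset.sum_congr rfl fun j _ => Finset.sum_congr rfl fun k _ => by ring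

end Polynomial

variable {F V : Type*} [Field F] [Fintype F] [AddCommGroup V] [Module F V] [FiniteDimensional F V]

theorem exists_ne_zero_apply_self_eq_zero (B : LinearMap.BilinForm F V) (h : 2 < finrank F V) :
    ∃ v ≠ 0, B v v = 0 := by
  classical
  let b := finBasis F V
  have hdeg : (diagPolynomial B b).totalDegree < Fintype.card (Fin (finrank F V)) := by
    simpa using (isHomogeneous_diagPolynomial B b).totalDegree_le.trans_lt h
  have hdvd := char_dvd_card_solutions (ringChar F) hdeg
  have hzero : eval 0 (diagPolynomial B b) = 0 := by rw [eval_diagPolynomial]; simp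
  obtain ⟨⟨x, hx⟩, hne⟩ := Fintype.exists_ne_of_one_lt_card
    ((CharP.char_is_prime F (ringChar F)).one_lt.trans_le
      (Nat.le_of_dvd (Fintype.card_pos_iff.mpr ⟨⟨0, hzero⟩⟩) hdvd)) ⟨0, hzero⟩
  refine ⟨b.equivFun.symm x, ?_, (eval_diagPolynomial B b x).symm.trans hx⟩
  rw [Ne, LinearEquiv.map_eq_zero_iff]
  exact fun h0 => hne (Subtype.ext h0)

end LinearMap.BilinForm

namespace FiniteField

open Finset

variable (F : Type*) {K : Type*} [Field F] [Fintype F] [Field K] [Finite K] [Algebra F K]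

noncomputable def frobeniusTraceForm (d : K) (s : ℕ) : LinearMap.BilinForm F K :=
  (Algebra.traceForm F K).compl₁₂
    (LinearMap.mulLeft F d ∘ₗ (frobeniusAlgEquivOfAlgebraic F K ^ s).toLinearMap) LinearMap.id

lemma algebraMap_frobeniusTraceForm_apply_self (d : K) (s : ℕ) (u : K) :
    algebraMap F K (frobeniusTraceForm F d s u u) =
      ∑ i ∈ range (finrank F K), (d * u ^ (Nat.card F ^ s + 1)) ^ (Nat.card F ^ i) := by
  have hfrob : (frobeniusAlgEquivOfAlgebraic F K ^ s) u = u ^ Nat.card F ^ s := by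
    rw [AlgEquiv.coe_pow, coe_frobeniusAlgEquivOfAlgebraic_iterate, Fintype.card_eq_nat_card]
  simp only [frobeniusTraceForm, LinearMap.compl₁₂_apply, LinearMap.comp_apply,
    LinearMap.mulLeft_apply, AlgEquiv.toLinearMap_apply, LinearMap.id_apply,
    Algebra.traceForm_apply, hfrob, algebraMap_trace_eq_sum_pow, pow_succ, mul_assoc]

theorem exists_ne_zero_sum_pow_eq_zero (h : 2 < finrank F K) (d : K) (s : ℕ) :
    ∃ u ≠ 0,
      ∑ i ∈ range (finrank F K), (d * u ^ (Nat.card F ^ s + 1)) ^ (Nat.card F ^ i) = 0 := by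
  obtain ⟨u, hu, hB⟩ :=
    LinearMap.BilinForm.exists_ne_zero_apply_self_eq_zero (frobeniusTraceForm F d s) h
  exact ⟨u, hu, by rw [← algebraMap_frobeniusTraceForm_apply_self, hB, map_zero]⟩

end FiniteField

theorem Module.finrank_eq_of_natCard_eq_pow {F K : Type*} [Field F] [Field K] [Finite K]
    [Algebra F K] {n : ℕ} (h : Nat.card K = Nat.card F ^ n) : finrank F K = n := by
  have : Finite F := .of_injective _ (algebraMap F K).injective
  exact Nat.pow_right_injective (Finite.one_lt_card (α := F))
    ((natCard_eq_pow_finrank (K := F)).symm.trans h)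

theorem GaloisField.nonempty_ringHom_of_card_eq_pow {p e n : ℕ} [Fact p.Prime] (he : e ≠ 0)
    {K : Type*} [Field K] [Fintype K] (hK : Fintype.card K = (p ^ e) ^ n) :
    Nonempty (GaloisField p e →+* K) := by
  rw [← pow_mul] at hK
  have := charP_of_card_eq_prime_pow hK
  let := ZMod.algebra K p
  have hrank : Module.finrank (ZMod p) K = e * n :=
    Nat.pow_right_injective (Nat.Prime.two_le Fact.out)
      ((FiniteField.pow_finrank_eq_card p K).trans hK)
  have hdvd : Module.finrank (ZMod p) (GaloisField p e) ∣ Module.finrank (ZMod p) K := by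
    rw [GaloisField.finrank p he, hrank]
    exact dvd_mul_right e n
  obtain ⟨f⟩ := FiniteField.nonempty_algHom_of_finrank_dvd hdvd
  exact ⟨f.toRingHom⟩

theorem stmt_15_general (q n s : ℕ) (hq : IsPrimePow q) (hn : 4 ≤ n) (K : Type*) [Field K] [Fintype K]
    (hK : Fintype.card K = q ^ n) (d : K) :
    ∃ u : K, u ≠ 0 ∧
      ∑ i ∈ Finset.range n, (d * u ^ (q ^ s + 1)) ^ (q ^ i) = 0 := by
  obtain ⟨p, e, hp, he, rfl⟩ := hq
  have : Fact p.Prime := ⟨Nat.prime_iff.mpr hp⟩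
  obtain ⟨f⟩ := GaloisField.nonempty_ringHom_of_card_eq_pow he.ne' hK
  let := f.toAlgebra
  let := Fintype.ofFinite (GaloisField p e)
  have hcard : Nat.card (GaloisField p e) = p ^ e := GaloisField.card p e he.ne'
  have hrank : finrank (GaloisField p e) K = n :=
    finrank_eq_of_natCard_eq_pow (by rw [hcard, ← Fintype.card_eq_nat_card, hK])
  have key := FiniteField.exists_ne_zero_sum_pow_eq_zero (GaloisField p e) (by omega) d s
  rwa [hcard, hrank] at key

/-- For even `n` and nonzero `d`, there is a nonzero `u` with
`Tr(d u^(σ+1)) = 0`. -/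
theorem stmt_15 (q n s : ℕ) (hq : IsPrimePow q) (hn : 4 ≤ n) (heven : Even n)
    (hs : 0 < s) (hsn : Nat.Coprime s n) (K : Type*) [Field K] [Fintype K]
    (hK : Fintype.card K = q ^ n) (d : K) (hd : d ≠ 0) :
    ∃ u : K, u ≠ 0 ∧
      ∑ i ∈ Finset.range n, (d * u ^ (q ^ s + 1)) ^ (q ^ i) = 0 :=
  stmt_15_general q n s hq hn K hK d
end

section
/- Let b₀, …, b_{n−1} ∈ K and let M be the σ-Dickson matrix associated with them. If det M = 0, then for every row index r, the r-th row of M lies in the K-linear span of the remaining n−1 rows of M. -/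
/-!
A left-kernel vector `v` of the Dickson matrix `M` certifies that the rows with `v r ≠ 0` are
spanned by the others. Row `r + 1` of `M` is row `r` shifted cyclically by one place with the
field automorphism `x ↦ x ^ σ` applied, so applying the same shift-and-twist to `v` gives
another left-kernel vector. Starting from any nonzero coordinate of `v`, iterating this moves a
nonzero coordinate to every position.
-/

open Matrix

theorem Matrix.mem_span_rows_ne_of_vecMul_eq_zero {m n K : Type*} [Fintype m] [DecidableEq m]
    [Field K] {M : Matrix m n K} {w : m → K} (hw : w ᵥ* M = 0) {r : m} (hr : w r ≠ 0) :
    M r ∈ Submodule.span K (M '' {i | i ≠ r}) := by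
  have hsum : w r • M r + ∑ j ∈ Finset.univ.erase r, w j • M j = 0 := by
    rw [Finset.add_sum_erase _ (fun j => w j • M j) (Finset.mem_univ r), ← vecMul_eq_sum, hw]
  have hrow : M r = -(w r)⁻¹ • ∑ j ∈ Finset.univ.erase r, w j • M j := by
    rw [neg_smul, eq_neg_iff_add_eq_zero, ← inv_smul_smul₀ hr (M r), ← smul_add, hsum, smul_zero]
  rw [hrow]
  refine Submodule.smul_mem _ _ (Submodule.sum_mem _ fun j hj => Submodule.smul_mem _ _ ?_)
  exact Submodule.subset_span ⟨j, Finset.ne_of_mem_erase hj, rfl⟩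

section SemilinearShift

variable {ι K : Type*} [AddCommGroup ι] [Fintype ι] {g : ι}

theorem Matrix.vecMul_map_sub_eq_zero [Semiring K] {φ : K →+* K} {M : Matrix ι ι K}
    (hM : ∀ i c, M (i + g) c = φ (M i (c - g))) {w : ι → K} (hw : w ᵥ* M = 0) :
    (fun j => φ (w (j - g))) ᵥ* M = 0 := by
  ext c
  calc ∑ j, φ (w (j - g)) * M j c
      = ∑ i, φ (w (i + g - g)) * M (i + g) c :=
        (Equiv.sum_comp (Equiv.addRight g) fun j => φ (w (j - g)) * M j c).symm
    _ = φ ((w ᵥ* M) (c - g)) := by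
        simp only [add_sub_cancel_right, hM, ← map_mul, ← map_sum]; rfl
    _ = 0 := by rw [hw, Pi.zero_apply, map_zero]

theorem Matrix.exists_vecMul_eq_zero_apply_add_nsmul_ne_zero [DivisionRing K] {φ : K →+* K}
    {M : Matrix ι ι K} (hM : ∀ i c, M (i + g) c = φ (M i (c - g))) {w : ι → K}
    (hw : w ᵥ* M = 0) {i : ι} (hi : w i ≠ 0) (a : ℕ) :
    ∃ w' : ι → K, w' ᵥ* M = 0 ∧ w' (i + a • g) ≠ 0 := by
  induction a generalizing w i with
  | zero => exact ⟨w, hw, by simpa using hi⟩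
  | succ a ih =>
    have hshift : φ (w (i + g - g)) ≠ 0 := by
      rwa [add_sub_cancel_right, map_ne_zero]
    rw [succ_nsmul', ← add_assoc]
    exact ih (vecMul_map_sub_eq_zero hM hw) hshift

end SemilinearShift

theorem pow_pow_mod_eq {M : Type*} [Monoid M] {t n : ℕ} (ht : ∀ x : M, x ^ t ^ n = x)
    (x : M) (a : ℕ) : x ^ t ^ (a % n) = x ^ t ^ a := by
  conv_rhs => rw [← Nat.mod_add_div a n]
  induction a / n with
  | zero => rw [mul_zero, add_zero]
  | succ k ih => rw [Nat.mul_succ, ← add_assoc, pow_add, pow_mul, ht, ih]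

theorem FiniteField.exists_ringHom_eq_pow_of_dvd_card_pow (K : Type*) [Field K] [Fintype K]
    {t m : ℕ} (ht : t ∣ Fintype.card K ^ m) : ∃ φ : K →+* K, ∀ x, φ x = x ^ t := by
  obtain ⟨p, hchar⟩ := CharP.exists K
  obtain ⟨e, hp, hcard⟩ := FiniteField.card K p
  have : Fact p.Prime := ⟨hp⟩
  rw [hcard, ← pow_mul, Nat.dvd_prime_pow hp] at ht
  obtain ⟨k, -, rfl⟩ := ht
  exact ⟨iterateFrobenius K p k, iterateFrobenius_def p k⟩

theorem Fin.val_add_sub_mod {n : ℕ} (r c : Fin n) :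
    ((c : ℕ) + n - r) % n = ((c - r : Fin n) : ℕ) := by
  rw [Fin.val_sub]
  congr 1
  omega

theorem dickson_apply_add_one_left {K : Type*} [CommMonoid K] {n t : ℕ} [NeZero n]
    (ht : ∀ x : K, x ^ t ^ n = x) {b : ℕ → K} {M : Matrix (Fin n) (Fin n) K}
    (hM : ∀ r c : Fin n, M r c = b (((c : ℕ) + n - (r : ℕ)) % n) ^ t ^ (r : ℕ))
    (i c : Fin n) : M (i + 1) c = M i (c - 1) ^ t := by
  simp only [hM, Fin.val_add_sub_mod, ← pow_mul, ← pow_succ]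
  rw [Fin.val_add, Fin.val_one', Nat.add_mod_mod, pow_pow_mod_eq ht, sub_sub, add_comm 1 i]

theorem stmt_17_general (q n s : ℕ) (K : Type*) [Field K] [Fintype K]
    (hK : Fintype.card K = q ^ n)
    (b : ℕ → K) (M : Matrix (Fin n) (Fin n) K)
    (hM : ∀ r c : Fin n,
      M r c = b (((c : ℕ) + n - (r : ℕ)) % n) ^ ((q ^ s) ^ (r : ℕ)))
    (hdet : M.det = 0) :
    ∀ r : Fin n, M r ∈ Submodule.span K (M '' {i : Fin n | i ≠ r}) := by
  intro r
  have : NeZero n := ⟨by rintro rfl; rw [pow_zero] at hK; exact Fintype.one_lt_card.ne' hK⟩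
  have hcard : (q ^ s) ^ n = Fintype.card K ^ s := by rw [hK, pow_right_comm]
  obtain ⟨φ, hφ⟩ := FiniteField.exists_ringHom_eq_pow_of_dvd_card_pow K
    (hcard ▸ dvd_pow_self (q ^ s) (NeZero.ne n))
  have hshift (i c : Fin n) : M (i + 1) c = φ (M i (c - 1)) := by
    rw [hφ, dickson_apply_add_one_left (fun x => by rw [hcard, FiniteField.pow_card_pow]) hM]
  obtain ⟨v, hv0, hvM⟩ := exists_vecMul_eq_zero_iff.mpr hdet
  obtain ⟨i, hi⟩ := Function.ne_iff.mp hv0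
  obtain ⟨w, hw, hwr⟩ := exists_vecMul_eq_zero_apply_add_nsmul_ne_zero hshift hvM hi (r - i).val
  open Fin.CommRing in rw [nsmul_one, Fin.cast_val_eq_self, add_sub_cancel] at hwr
  exact mem_span_rows_ne_of_vecMul_eq_zero hw hwr

/-- If a σ-Dickson matrix is singular, then each of its rows lies in the
span of the remaining rows. -/
theorem stmt_17 (q n s : ℕ) (hq : IsPrimePow q) (hn : 3 ≤ n) (hs : 0 < s)
    (hsn : Nat.Coprime s n) (K : Type*) [Field K] [Fintype K]
    (hK : Fintype.card K = q ^ n)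
    (b : ℕ → K) (M : Matrix (Fin n) (Fin n) K)
    (hM : ∀ r c : Fin n,
      M r c = b (((c : ℕ) + n - (r : ℕ)) % n) ^ ((q ^ s) ^ (r : ℕ)))
    (hdet : M.det = 0) :
    ∀ r : Fin n, M r ∈ Submodule.span K (M '' {i : Fin n | i ≠ r}) :=
  stmt_17_general q n s K hK b M hM hdet
end
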